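/- There exists a ∈ H with t(a) = −a such that for every nonzero w ∈ W the number i·⟨w, σ(w)·a⟩ is real and strictly positive (i.e., the Hermitian form h_a(w, w') := i·⟨w, σ(w')·a⟩ is positive definite on W); together with the total isotropy of W for ω_a(x,y) := ⟨x, y·a⟩, this says ω_a polarizes the weight 1 Hodge structure with H^{1,0}-part W. -/

import Mathlib

/-!
Take a basis `p_j` of `H^{2,0}` and `u = ∑ σ(p_j) t(p_j)`. The element `γ = i(σu - u)` is real and
`Re h_γ(w, w) = ∑ ⟨w p_j, σ(w p_j)⟩ - ⟨w σ(p_j), σ(w σ(p_j))⟩`. As `W ⊆ H^{2,0} ⊕ H^{2,0}·H^{0,2}`,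
for `w ∈ W` we have `w p_j ∈ H^{2,0}` and `w σ(p_j) ∈ H^{1,1}`, so every term is `≥ 0` by the
polarization. They cannot all vanish unless `w = 0`, by the adjunction and because `t` preserves
`H^{2,0}` (a consequence of `1 ∈ H^{1,1}`).
Positivity on `W` is an open condition, so a rational `a₀` close to `γ` still works, and
`a = a₀ - t(a₀)` turns `h_{a₀}(w, w)` into the real number `2 Re h_{a₀}(w, w)`.
Isotropy: `⟨x v, w'⟩ = ⟨x, w' t(v)⟩` pairs `H^{2,0}` with `W ⊆ H^{2,0} ⊕ H^{1,1}`.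
-/

open scoped TensorProduct

noncomputable section

/-- Complex conjugation on `ℂ` as a `ℚ`-algebra homomorphism. -/
def conjQAlg : ℂ →ₐ[ℚ] ℂ := (Complex.conjAe.restrictScalars ℚ).toAlgHom

variable (H : Type) [Ring H] [Algebra ℚ H] [FiniteDimensional ℚ H]

/-- The conjugate-linear involution of `H_ℂ = ℂ ⊗[ℚ] H` fixing `H`. -/
def sigmaC : ℂ ⊗[ℚ] H →ₗ[ℚ] ℂ ⊗[ℚ] H :=
  (Algebra.TensorProduct.map conjQAlg (AlgHom.id ℚ H)).toLinearMap

/-- The inclusion of `H` into `H_ℂ = ℂ ⊗[ℚ] H`. -/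
def inclH : H →ₐ[ℚ] ℂ ⊗[ℚ] H := Algebra.TensorProduct.includeRight

/-- The data of a polarized weight 2 Hodge structure on a finite-dimensional `ℚ`-algebra `H`,
compatible with the ring structure:
(i) a Hodge decomposition `H_ℂ = H^{2,0} ⊕ H^{1,1} ⊕ H^{0,2}` with `σ(H^{2,0}) = H^{0,2}`,
`σ(H^{1,1}) = H^{1,1}`;
(ii) a polarization: a symmetric `ℚ`-bilinear form `B` on `H` with `ℂ`-bilinear extension `BC`
to `H_ℂ`, whose associated Hermitian pairing `h(α,β) := BC α (σ β)` makes the Hodge pieces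
pairwise orthogonal and is positive definite on `H^{2,0}`, `H^{0,2}` and negative definite on
`H^{1,1}`;
(iii) the product is a morphism of Hodge structures of bidegree `(-1,-1)`:
`H^{p,q}·H^{p',q'} ⊆ H^{p+p'-1,q+q'-1}`;
(iv) an adjunction `t`: a `ℚ`-linear involution with `t(ab) = t(b)t(a)`,
`⟨ab,c⟩ = ⟨b, t(a)c⟩` and `⟨ab,c⟩ = ⟨a, c·t(b)⟩`. -/
structure HodgeAlgebraData where
  H20 : Submodule ℂ (ℂ ⊗[ℚ] H)
  H11 : Submodule ℂ (ℂ ⊗[ℚ] H)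
  H02 : Submodule ℂ (ℂ ⊗[ℚ] H)
  sup_top : H20 ⊔ H11 ⊔ H02 = ⊤
  disj1 : H20 ⊓ (H11 ⊔ H02) = ⊥
  disj2 : H11 ⊓ H02 = ⊥
  sigma_20 : ∀ x ∈ H20, sigmaC H x ∈ H02
  sigma_02 : ∀ x ∈ H02, sigmaC H x ∈ H20
  sigma_11 : ∀ x ∈ H11, sigmaC H x ∈ H11
  B : H →ₗ[ℚ] H →ₗ[ℚ] ℚ
  B_symm : ∀ a b : H, B a b = B b a
  BC : (ℂ ⊗[ℚ] H) →ₗ[ℂ] (ℂ ⊗[ℚ] H) →ₗ[ℂ] ℂ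
  BC_extends : ∀ a b : H, BC (inclH H a) (inclH H b) = (B a b : ℂ)
  BC_symm : ∀ x y, BC x y = BC y x
  BC_conj : ∀ x y, BC (sigmaC H x) (sigmaC H y) = starRingEnd ℂ (BC x y)
  orth_20_11 : ∀ x ∈ H20, ∀ y ∈ H11, BC x (sigmaC H y) = 0
  orth_20_02 : ∀ x ∈ H20, ∀ y ∈ H02, BC x (sigmaC H y) = 0
  orth_11_02 : ∀ x ∈ H11, ∀ y ∈ H02, BC x (sigmaC H y) = 0
  pos_20 : ∀ x ∈ H20, x ≠ 0 → 0 < (BC x (sigmaC H x)).re ∧ (BC x (sigmaC H x)).im = 0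
  pos_02 : ∀ x ∈ H02, x ≠ 0 → 0 < (BC x (sigmaC H x)).re ∧ (BC x (sigmaC H x)).im = 0
  neg_11 : ∀ x ∈ H11, x ≠ 0 → (BC x (sigmaC H x)).re < 0 ∧ (BC x (sigmaC H x)).im = 0
  mul_20_20 : ∀ x ∈ H20, ∀ y ∈ H20, x * y = 0
  mul_20_11 : ∀ x ∈ H20, ∀ y ∈ H11, x * y ∈ H20
  mul_11_20 : ∀ x ∈ H11, ∀ y ∈ H20, x * y ∈ H20
  mul_11_11 : ∀ x ∈ H11, ∀ y ∈ H11, x * y ∈ H11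
  mul_20_02 : ∀ x ∈ H20, ∀ y ∈ H02, x * y ∈ H11
  mul_02_20 : ∀ x ∈ H02, ∀ y ∈ H20, x * y ∈ H11
  mul_02_02 : ∀ x ∈ H02, ∀ y ∈ H02, x * y = 0
  mul_11_02 : ∀ x ∈ H11, ∀ y ∈ H02, x * y ∈ H02
  mul_02_11 : ∀ x ∈ H02, ∀ y ∈ H11, x * y ∈ H02
  t : H →ₗ[ℚ] H
  t_invol : ∀ a : H, t (t a) = a
  t_mul : ∀ a b : H, t (a * b) = t b * t a
  adj_left : ∀ a b c : H, B (a * b) c = B b (t a * c)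
  adj_right : ∀ a b c : H, B (a * b) c = B a (c * t b)

variable {H}

/-- `W := H^{2,0}·H_ℂ`, the `ℂ`-linear span of all products `x·y` with `x ∈ H^{2,0}`,
`y ∈ H_ℂ`. -/
def HodgeAlgebraData.W (D : HodgeAlgebraData H) : Submodule ℂ (ℂ ⊗[ℚ] H) := D.H20 * ⊤

/-- `σ(W)`, the image of `W` under the conjugation `σ`, as a `ℚ`-subspace of `H_ℂ`. -/
def HodgeAlgebraData.sigmaW (D : HodgeAlgebraData H) : Submodule ℚ (ℂ ⊗[ℚ] H) :=
  (D.W.restrictScalars ℚ).map (sigmaC H)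

/-- The `ℂ`-linear extension of `t` to `H_ℂ`. -/
def HodgeAlgebraData.tC (D : HodgeAlgebraData H) : ℂ ⊗[ℚ] H →ₗ[ℂ] ℂ ⊗[ℚ] H :=
  LinearMap.baseChange ℂ D.t

theorem isOpen_setOf_forall_ne_zero_pos {P V : Type*} [TopologicalSpace P]
    [NormedAddCommGroup V] [NormedSpace ℝ V] [FiniteDimensional ℝ V]
    (F : P → V → ℝ) (hF : Continuous (Function.uncurry F))
    (hF2 : ∀ p (c : ℝ) v, F p (c • v) = c ^ 2 * F p v) :
    IsOpen {p | ∀ v ≠ 0, 0 < F p v} := by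
  refine isOpen_iff_eventually.2 fun p₀ hp₀ => ?_
  have hsphere : ∀ᶠ p in nhds p₀, ∀ u ∈ Metric.sphere (0 : V) 1, 0 < F p u :=
    (isCompact_sphere 0 1).eventually_forall_of_forall_eventually fun u hu =>
      hF.continuousAt.eventually (lt_mem_nhds (hp₀ u (ne_zero_of_mem_unit_sphere ⟨u, hu⟩)))
  filter_upwards [hsphere] with p hp v hv
  have hv' : 0 < ‖v‖ := norm_pos_iff.2 hv
  have hu : ‖v‖⁻¹ • v ∈ Metric.sphere (0 : V) 1 := by
    rw [mem_sphere_zero_iff_norm, norm_smul, norm_inv, norm_norm, inv_mul_cancel₀ hv'.ne']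
  have hpos := hp _ hu
  rw [hF2] at hpos
  exact pos_of_mul_pos_right hpos (by positivity)

theorem exists_rat_combination_pos {ι V : Type*} [Fintype ι]
    [NormedAddCommGroup V] [NormedSpace ℝ V] [FiniteDimensional ℝ V]
    (Q : ι → V → ℝ) (hQ : ∀ l, Continuous (Q l))
    (hQ2 : ∀ l (c : ℝ) v, Q l (c • v) = c ^ 2 * Q l v)
    {r : ι → ℝ} (hr : ∀ v ≠ 0, 0 < ∑ l, r l * Q l v) :
    ∃ s : ι → ℚ, ∀ v ≠ 0, 0 < ∑ l, (s l : ℝ) * Q l v := by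
  have hopen := isOpen_setOf_forall_ne_zero_pos (fun (r : ι → ℝ) v => ∑ l, r l * Q l v)
    (by fun_prop) fun p c v => by
      simp only [hQ2, Finset.mul_sum]
      exact Finset.sum_congr rfl fun _ _ => by ring
  exact (DenseRange.piMap fun _ => Rat.denseRange_cast).exists_mem_open hopen ⟨r, hr⟩

section Conjugation

variable {H : Type} [Ring H] [Algebra ℚ H]

theorem sigmaC_tmul (c : ℂ) (a : H) : sigmaC H (c ⊗ₜ a) = starRingEnd ℂ c ⊗ₜ a := rfl

theorem sigmaC_mul (x y : ℂ ⊗[ℚ] H) : sigmaC H (x * y) = sigmaC H x * sigmaC H y :=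
  map_mul (Algebra.TensorProduct.map conjQAlg (AlgHom.id ℚ H)) x y

theorem sigmaC_smul (c : ℂ) (x : ℂ ⊗[ℚ] H) :
    sigmaC H (c • x) = starRingEnd ℂ c • sigmaC H x := by
  induction x using TensorProduct.induction_on with
  | zero => simp
  | tmul d a => simp only [TensorProduct.smul_tmul', sigmaC_tmul, smul_eq_mul, map_mul]
  | add x y hx hy => rw [smul_add, map_add, hx, hy, map_add, smul_add]

@[simp]
theorem sigmaC_sigmaC (x : ℂ ⊗[ℚ] H) : sigmaC H (sigmaC H x) = x := by
  induction x using TensorProduct.induction_on with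
  | zero => simp
  | tmul d a => rw [sigmaC_tmul, sigmaC_tmul, Complex.conj_conj]
  | add x y hx hy => rw [map_add, map_add, hx, hy]

theorem inclH_apply (a : H) : inclH H a = 1 ⊗ₜ a := rfl

@[simp]
theorem sigmaC_inclH (a : H) : sigmaC H (inclH H a) = inclH H a := by
  simp [inclH_apply, sigmaC_tmul]

theorem inclH_induction {P : ℂ ⊗[ℚ] H → Prop} (zero : P 0) (inclH : ∀ a, P (inclH H a))
    (smul : ∀ (c : ℂ) x, P x → P (c • x)) (add : ∀ x y, P x → P y → P (x + y)) (x) : P x := by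
  induction x using TensorProduct.induction_on with
  | zero => exact zero
  | tmul c a => simpa [inclH_apply, TensorProduct.smul_tmul'] using smul c _ (inclH a)
  | add x y hx hy => exact add x y hx hy

theorem exists_real_coords_of_sigmaC_eq {ι : Type*} [Fintype ι] (e : Module.Basis ι ℚ H)
    {γ : ℂ ⊗[ℚ] H} (hγ : sigmaC H γ = γ) :
    ∃ r : ι → ℝ, γ = ∑ l, (r l : ℂ) • inclH H (e l) := by
  set c := (e.baseChange ℂ).repr γ
  have hc : γ = ∑ l, c l • inclH H (e l) := by
    simpa [Module.Basis.baseChange_apply, inclH_apply] using ((e.baseChange ℂ).sum_repr γ).symm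
  have hconj : γ = ∑ l, starRingEnd ℂ (c l) • inclH H (e l) := by
    conv_lhs => rw [← hγ, hc]
    simp [map_sum, sigmaC_smul]
  refine ⟨fun l => (c l).re, ?_⟩
  calc γ = (2 : ℂ)⁻¹ • (γ + γ) := by
        rw [← two_smul ℂ γ, smul_smul, inv_mul_cancel₀ two_ne_zero, one_smul]
    _ = (2 : ℂ)⁻¹ • ((∑ l, c l • inclH H (e l)) +
          ∑ l, starRingEnd ℂ (c l) • inclH H (e l)) := by rw [← hc, ← hconj]
    _ = _ := by
      simp only [← Finset.sum_add_distrib, ← add_smul, Finset.smul_sum, smul_smul,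
        Complex.re_eq_add_conj]
      congr! 2
      ring

theorem mul_eq_zero_and_mul_sigmaC_eq_zero_of_mem_span {s : Set (ℂ ⊗[ℚ] H)} {y z : ℂ ⊗[ℚ] H}
    (hz : z ∈ Submodule.span ℂ s) (h : ∀ p ∈ s, y * p = 0 ∧ y * sigmaC H p = 0) :
    y * z = 0 ∧ y * sigmaC H z = 0 := by
  induction hz using Submodule.span_induction with
  | mem p hp => exact h p hp
  | zero => simp
  | add a b _ _ ha hb => simp [mul_add, ha.1, hb.1, ha.2, hb.2]
  | smul c a _ ha => simp [sigmaC_smul, ha.1, ha.2]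

end Conjugation

namespace HodgeAlgebraData

variable {H : Type} [Ring H] [Algebra ℚ H] (D : HodgeAlgebraData H)

theorem tC_tmul (c : ℂ) (a : H) : D.tC (c ⊗ₜ a) = c ⊗ₜ D.t a := by
  simp [HodgeAlgebraData.tC]

theorem tC_inclH (a : H) : D.tC (inclH H a) = inclH H (D.t a) := D.tC_tmul 1 a

@[simp]
theorem tC_tC (x : ℂ ⊗[ℚ] H) : D.tC (D.tC x) = x := by
  induction x using TensorProduct.induction_on with
  | zero => simp
  | tmul c a => rw [tC_tmul, tC_tmul, D.t_invol]
  | add x y hx hy => rw [map_add, map_add, hx, hy]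

theorem tC_sigmaC (x : ℂ ⊗[ℚ] H) : D.tC (sigmaC H x) = sigmaC H (D.tC x) := by
  induction x using TensorProduct.induction_on with
  | zero => simp
  | tmul c a => rw [sigmaC_tmul, tC_tmul, tC_tmul, sigmaC_tmul]
  | add x y hx hy => rw [map_add, map_add, hx, hy, map_add, map_add]

theorem BC_adj_right (x y z : ℂ ⊗[ℚ] H) : D.BC (x * y) z = D.BC x (z * D.tC y) := by
  induction y using inclH_induction with
  | zero => simp
  | smul c y hy => simp only [mul_smul_comm, map_smul, LinearMap.smul_apply, hy]
  | add y y' hy hy' => simp only [mul_add, map_add, LinearMap.add_apply, hy, hy']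
  | inclH b =>
    induction x using inclH_induction with
    | zero => simp
    | smul c x hx => simp only [smul_mul_assoc, map_smul, LinearMap.smul_apply, hx]
    | add x x' hx hx' => simp only [add_mul, map_add, LinearMap.add_apply, hx, hx']
    | inclH a =>
      induction z using inclH_induction with
      | zero => simp
      | smul c z hz => simp only [smul_mul_assoc, map_smul, hz]
      | add z z' hz hz' => simp only [add_mul, map_add, hz, hz']
      | inclH c =>
        rw [tC_inclH, ← map_mul, ← map_mul, D.BC_extends, D.BC_extends, D.adj_right]

theorem BC_mul_sigmaC_mul (y b : ℂ ⊗[ℚ] H) :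
    D.BC (y * b) (sigmaC H (y * b)) = D.BC y (sigmaC H y * (sigmaC H b * D.tC b)) := by
  rw [D.BC_adj_right, sigmaC_mul, mul_assoc]

theorem exists_mem_add_add (v : ℂ ⊗[ℚ] H) :
    ∃ p ∈ D.H20, ∃ q ∈ D.H11, ∃ r ∈ D.H02, v = p + q + r := by
  obtain ⟨pq, hpq, r, hr, rfl⟩ := Submodule.mem_sup.1 (D.sup_top ▸ Submodule.mem_top (x := v))
  obtain ⟨p, hp, q, hq, rfl⟩ := Submodule.mem_sup.1 hpq
  exact ⟨p, hp, q, hq, r, hr, rfl⟩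

theorem eq_zero_of_add_add_eq_zero {p q r : ℂ ⊗[ℚ] H} (hp : p ∈ D.H20) (hq : q ∈ D.H11)
    (hr : r ∈ D.H02) (h : p + q + r = 0) : p = 0 ∧ q = 0 ∧ r = 0 := by
  have hp0 : p = 0 := by
    have hqr : p = -q + -r := by
      rw [← neg_add]; exact eq_neg_of_add_eq_zero_left (by rwa [← add_assoc])
    have : p ∈ D.H20 ⊓ (D.H11 ⊔ D.H02) :=
      ⟨hp, hqr ▸ Submodule.add_mem_sup (neg_mem hq) (neg_mem hr)⟩
    simpa [D.disj1] using this
  subst hp0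
  have hq0 : q = 0 := by
    have hqr : q = -r := eq_neg_of_add_eq_zero_left (by simpa using h)
    have : q ∈ D.H11 ⊓ D.H02 := ⟨hq, hqr ▸ neg_mem hr⟩
    simpa [D.disj2] using this
  subst hq0
  simpa using h

theorem BC_20_20 {x y : ℂ ⊗[ℚ] H} (hx : x ∈ D.H20) (hy : y ∈ D.H20) : D.BC x y = 0 := by
  simpa using D.orth_20_02 x hx _ (D.sigma_20 y hy)

theorem BC_20_11 {x y : ℂ ⊗[ℚ] H} (hx : x ∈ D.H20) (hy : y ∈ D.H11) : D.BC x y = 0 := by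
  simpa using D.orth_20_11 x hx _ (D.sigma_11 y hy)

theorem BC_11_20 {x y : ℂ ⊗[ℚ] H} (hx : x ∈ D.H11) (hy : y ∈ D.H20) : D.BC x y = 0 := by
  simpa using D.orth_11_02 x hx _ (D.sigma_20 y hy)

theorem eq_zero_of_mem_20_of_BC_sigmaC {x : ℂ ⊗[ℚ] H} (hx : x ∈ D.H20)
    (h : D.BC x (sigmaC H x) = 0) : x = 0 := by
  by_contra hne
  simpa [h] using (D.pos_20 x hx hne).1

theorem eq_zero_of_mem_11_of_BC_sigmaC {x : ℂ ⊗[ℚ] H} (hx : x ∈ D.H11)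
    (h : D.BC x (sigmaC H x) = 0) : x = 0 := by
  by_contra hne
  simpa [h] using (D.neg_11 x hx hne).1

theorem eq_zero_of_mem_02_of_BC_sigmaC {x : ℂ ⊗[ℚ] H} (hx : x ∈ D.H02)
    (h : D.BC x (sigmaC H x) = 0) : x = 0 := by
  by_contra hne
  simpa [h] using (D.pos_02 x hx hne).1

/-- Comparing Hodge components in `f = 1 * f` and then in `e = e * 1`, `g = g * 1`, where
`1 = e + f + g`, kills `e` and `g`. -/
theorem one_mem_11 : (1 : ℂ ⊗[ℚ] H) ∈ D.H11 := by
  obtain ⟨e, he, f, hf, g, hg, h1⟩ := D.exists_mem_add_add 1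
  have hf' : e * f = 0 ∧ f * f - f = 0 ∧ g * f = 0 := by
    refine D.eq_zero_of_add_add_eq_zero (D.mul_20_11 e he f hf)
      (sub_mem (D.mul_11_11 f hf f hf) hf) (D.mul_02_11 g hg f hf) ?_
    rw [← sub_eq_zero.2 (one_mul f), h1]; noncomm_ring
  have he11 : e ∈ D.H11 := by
    have : e * 1 = e * g := by
      rw [h1, mul_add, mul_add, D.mul_20_20 e he e he, hf'.1, zero_add, zero_add]
    exact mul_one e ▸ this ▸ D.mul_20_02 e he g hg
  have hg11 : g ∈ D.H11 := by
    have : g * 1 = g * e := by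
      rw [h1, mul_add, mul_add, D.mul_02_02 g hg g hg, hf'.2.2, add_zero, add_zero]
    exact mul_one g ▸ this ▸ D.mul_02_20 g hg e he
  have he0 := (D.eq_zero_of_add_add_eq_zero he (neg_mem he11) (zero_mem _) (by simp)).1
  have hg0 := (D.eq_zero_of_add_add_eq_zero (zero_mem _) (neg_mem hg11) hg (by simp)).2.2
  simpa [h1, he0, hg0] using hf

theorem mem_20_of_BC_eq_zero {v : ℂ ⊗[ℚ] H} (h20 : ∀ z ∈ D.H20, D.BC v z = 0)
    (h11 : ∀ z ∈ D.H11, D.BC v z = 0) : v ∈ D.H20 := by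
  obtain ⟨p, hp, q, hq, r, hr, rfl⟩ := D.exists_mem_add_add v
  have hr0 : r = 0 := D.eq_zero_of_mem_02_of_BC_sigmaC hr (by
    simpa [D.orth_20_02 p hp r hr, D.orth_11_02 q hq r hr] using h20 _ (D.sigma_02 r hr))
  subst hr0
  have hq0 : q = 0 := D.eq_zero_of_mem_11_of_BC_sigmaC hq (by
    simpa [D.orth_20_11 p hp q hq] using h11 _ (D.sigma_11 q hq))
  simpa [hq0] using hp

theorem tC_mem_20 {x : ℂ ⊗[ℚ] H} (hx : x ∈ D.H20) : D.tC x ∈ D.H20 := by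
  have hBC : ∀ z, D.BC (D.tC x) z = D.BC 1 (z * x) := fun z => by
    rw [← one_mul (D.tC x), D.BC_adj_right, D.tC_tC]
  refine D.mem_20_of_BC_eq_zero (fun z hz => ?_) (fun z hz => ?_) <;> rw [hBC]
  · rw [D.mul_20_20 z hz x hx, map_zero]
  · exact D.BC_11_20 D.one_mem_11 (D.mul_11_20 z hz x hx)

theorem H20_mul_H02_le : D.H20 * D.H02 ≤ D.H11 := Submodule.mul_le.2 D.mul_20_02

theorem mul_eq_zero_of_mem_H20_mul_H02 {m r : ℂ ⊗[ℚ] H} (hm : m ∈ D.H20 * D.H02)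
    (hr : r ∈ D.H02) : m * r = 0 :=
  Submodule.mul_induction_on hm (fun x _ y hy => by rw [mul_assoc, D.mul_02_02 y hy r hr, mul_zero])
    fun a b ha hb => by rw [add_mul, ha, hb, add_zero]

theorem W_le : D.W ≤ D.H20 ⊔ D.H20 * D.H02 := by
  refine Submodule.mul_le.2 fun x hx v _ => ?_
  obtain ⟨p, hp, q, hq, r, hr, rfl⟩ := D.exists_mem_add_add v
  rw [mul_add, mul_add, D.mul_20_20 x hx p hp, zero_add]
  exact Submodule.add_mem_sup (D.mul_20_11 x hx q hq) (Submodule.mul_mem_mul hx hr)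

theorem mul_mem_W {w : ℂ ⊗[ℚ] H} (hw : w ∈ D.W) (z : ℂ ⊗[ℚ] H) : w * z ∈ D.W :=
  Submodule.mul_induction_on (hw : w ∈ D.H20 * ⊤)
    (fun x hx v _ => mul_assoc x v z ▸ Submodule.mul_mem_mul hx trivial)
    fun a b ha hb => by rw [add_mul]; exact add_mem ha hb

theorem mul_mem_20_of_mem_W {w z : ℂ ⊗[ℚ] H} (hw : w ∈ D.W) (hz : z ∈ D.H20) :
    w * z ∈ D.H20 := by
  obtain ⟨x, hx, m, hm, rfl⟩ := Submodule.mem_sup.1 (D.W_le hw)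
  rw [add_mul, D.mul_20_20 x hx z hz, zero_add]
  exact D.mul_11_20 m (D.H20_mul_H02_le hm) z hz

theorem mul_mem_11_of_mem_W {w z : ℂ ⊗[ℚ] H} (hw : w ∈ D.W) (hz : z ∈ D.H02) :
    w * z ∈ D.H11 := by
  obtain ⟨x, hx, m, hm, rfl⟩ := Submodule.mem_sup.1 (D.W_le hw)
  rw [add_mul, D.mul_eq_zero_of_mem_H20_mul_H02 hm hz, add_zero]
  exact D.mul_20_02 x hx z hz

theorem BC_W_W {w w' : ℂ ⊗[ℚ] H} (hw : w ∈ D.W) (hw' : w' ∈ D.W) : D.BC w w' = 0 := by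
  refine Submodule.mul_induction_on (hw : w ∈ D.H20 * ⊤) (fun x hx v _ => ?_)
    fun a b ha hb => by rw [map_add, LinearMap.add_apply, ha, hb, add_zero]
  obtain ⟨y, hy, m, hm, hsum⟩ := Submodule.mem_sup.1 (D.W_le (D.mul_mem_W hw' (D.tC v)))
  rw [D.BC_adj_right, ← hsum, map_add, D.BC_20_20 hx hy, D.BC_20_11 hx (D.H20_mul_H02_le hm),
    add_zero]

theorem eq_zero_of_mem_W {y : ℂ ⊗[ℚ] H} (hy : y ∈ D.W)
    (h : ∀ z ∈ D.H20, y * z = 0 ∧ y * sigmaC H z = 0) : y = 0 := by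
  obtain ⟨x, hx, m, hm, rfl⟩ := Submodule.mem_sup.1 (D.W_le hy)
  have hx0 : x = 0 := by
    have htx := D.sigma_20 _ (D.tC_mem_20 hx)
    have hzero : x * sigmaC H (D.tC x) = 0 := by
      simpa [add_mul, D.mul_eq_zero_of_mem_H20_mul_H02 hm htx] using (h _ (D.tC_mem_20 hx)).2
    refine D.eq_zero_of_mem_20_of_BC_sigmaC hx ?_
    simpa [D.BC_adj_right, D.tC_sigmaC] using congrArg (D.BC · 1) hzero
  subst hx0
  simp only [zero_add] at h ⊢
  have hann : ∀ a, ∀ z ∈ D.H20, D.BC m (a * z) = 0 := fun a z hz => by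
    rw [← D.tC_tC z, ← D.BC_adj_right, (h _ (D.tC_mem_20 hz)).1, map_zero, LinearMap.zero_apply]
  have hσm : sigmaC H m ∈ ⊤ * D.H20 :=
    Submodule.mul_induction_on hm
      (fun x _ g hg => sigmaC_mul (H := H) x g ▸ Submodule.mul_mem_mul trivial (D.sigma_02 g hg))
      fun a b ha hb => by rw [map_add]; exact add_mem ha hb
  refine D.eq_zero_of_mem_11_of_BC_sigmaC (D.H20_mul_H02_le hm) ?_
  exact Submodule.mul_induction_on hσm (fun a _ z hz => hann a z hz)
    fun a b ha hb => by rw [map_add, ha, hb, add_zero]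

/-- `hForm w x = h_x(w, w)`: the paper's Hermitian form `h_x` on the diagonal, linear in `x`. -/
def hForm (w : ℂ ⊗[ℚ] H) : ℂ ⊗[ℚ] H →ₗ[ℂ] ℂ :=
  Complex.I • D.BC w ∘ₗ LinearMap.mulLeft ℂ (sigmaC H w)

theorem hForm_apply (w x : ℂ ⊗[ℚ] H) : D.hForm w x = Complex.I * D.BC w (sigmaC H w * x) := rfl

theorem re_BC_sigmaC_nonneg_of_mem_20 {x : ℂ ⊗[ℚ] H} (hx : x ∈ D.H20) :
    0 ≤ (D.BC x (sigmaC H x)).re := by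
  rcases eq_or_ne x 0 with rfl | hne
  · simp
  · exact (D.pos_20 x hx hne).1.le

theorem re_BC_sigmaC_nonpos_of_mem_11 {x : ℂ ⊗[ℚ] H} (hx : x ∈ D.H11) :
    (D.BC x (sigmaC H x)).re ≤ 0 := by
  rcases eq_or_ne x 0 with rfl | hne
  · simp
  · exact (D.neg_11 x hx hne).1.le

theorem BC_sigmaC_mul_sum {ι : Type*} [Fintype ι] (p : ι → ℂ ⊗[ℚ] H) (y : ℂ ⊗[ℚ] H) :
    D.BC y (sigmaC H y * ∑ j, sigmaC H (p j) * D.tC (p j)) =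
      ∑ j, D.BC (y * p j) (sigmaC H (y * p j)) := by
  simp only [Finset.mul_sum, map_sum, D.BC_mul_sigmaC_mul]

theorem exists_sigmaC_eq_and_hForm_pos [FiniteDimensional ℂ (ℂ ⊗[ℚ] H)] :
    ∃ γ : ℂ ⊗[ℚ] H, sigmaC H γ = γ ∧ ∀ w ∈ D.W, w ≠ 0 → 0 < (D.hForm w γ).re := by
  let b := Module.finBasis ℂ D.H20
  let p j : ℂ ⊗[ℚ] H := b j
  have hp j : p j ∈ D.H20 := (b j).2
  have hspan : D.H20 ≤ Submodule.span ℂ (Set.range p) := fun z hz => by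
    have := Submodule.apply_mem_span_image_of_mem_span D.H20.subtype (b.mem_span ⟨z, hz⟩)
    rwa [← Set.range_comp] at this
  set u := ∑ j, sigmaC H (p j) * D.tC (p j) with hu
  have hσu : sigmaC H u = ∑ j, sigmaC H (sigmaC H (p j)) * D.tC (sigmaC H (p j)) := by
    simp [u, map_sum, sigmaC_mul, tC_sigmaC]
  refine ⟨Complex.I • (sigmaC H u - u), ?_, fun w hw hne => ?_⟩
  · rw [sigmaC_smul, map_sub, sigmaC_sigmaC, Complex.conj_I, neg_smul, ← smul_neg, neg_sub]
  have hre : (D.hForm w (Complex.I • (sigmaC H u - u))).re = ∑ j,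
      ((D.BC (w * p j) (sigmaC H (w * p j))).re -
        (D.BC (w * sigmaC H (p j)) (sigmaC H (w * sigmaC H (p j)))).re) := by
    rw [map_smul, hForm_apply, mul_sub, map_sub, hσu, D.BC_sigmaC_mul_sum, hu,
      D.BC_sigmaC_mul_sum, smul_eq_mul, ← mul_assoc, Complex.I_mul_I]
    simp [Complex.re_sum]
  have h20 j : 0 ≤ (D.BC (w * p j) (sigmaC H (w * p j))).re :=
    D.re_BC_sigmaC_nonneg_of_mem_20 (D.mul_mem_20_of_mem_W hw (hp j))
  have h11 j : (D.BC (w * sigmaC H (p j)) (sigmaC H (w * sigmaC H (p j)))).re ≤ 0 :=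
    D.re_BC_sigmaC_nonpos_of_mem_11 (D.mul_mem_11_of_mem_W hw (D.sigma_20 _ (hp j)))
  obtain ⟨j, hj⟩ : ∃ j, w * p j ≠ 0 ∨ w * sigmaC H (p j) ≠ 0 := by
    by_contra! hall
    exact hne (D.eq_zero_of_mem_W hw fun z hz =>
      mul_eq_zero_and_mul_sigmaC_eq_zero_of_mem_span (hspan hz)
        (Set.forall_mem_range.2 hall))
  rw [hre]
  refine Finset.sum_pos' (fun j _ => sub_nonneg.2 ((h11 j).trans (h20 j)))
    ⟨j, Finset.mem_univ j, ?_⟩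
  rcases hj with hj | hj
  · linarith [h11 j, (D.pos_20 _ (D.mul_mem_20_of_mem_W hw (hp j)) hj).1]
  · linarith [h20 j, (D.neg_11 _ (D.mul_mem_11_of_mem_W hw (D.sigma_20 _ (hp j))) hj).1]

theorem hForm_ofReal_smul (c : ℝ) (w x : ℂ ⊗[ℚ] H) :
    D.hForm ((c : ℂ) • w) x = (c : ℂ) ^ 2 * D.hForm w x := by
  simp only [hForm_apply, sigmaC_smul, Complex.conj_ofReal, smul_mul_assoc, map_smul,
    LinearMap.smul_apply, smul_eq_mul]
  ring

theorem continuous_hForm_sum_smul {ι : Type*} [Fintype ι] (ω : ι → ℂ ⊗[ℚ] H)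
    (x : ℂ ⊗[ℚ] H) : Continuous fun v : ι → ℂ => D.hForm (∑ j, v j • ω j) x := by
  have h (v : ι → ℂ) : D.hForm (∑ j, v j • ω j) x = Complex.I * ∑ j', ∑ j,
      starRingEnd ℂ (v j') * (v j * D.BC (ω j) (sigmaC H (ω j') * x)) := by
    simp [hForm_apply, map_sum, sigmaC_smul, Finset.sum_mul, Finset.mul_sum]
  simp_rw [h]
  fun_prop

theorem exists_hForm_inclH_pos [FiniteDimensional ℚ H] :
    ∃ a : H, ∀ w ∈ D.W, w ≠ 0 → 0 < (D.hForm w (inclH H a)).re := by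
  obtain ⟨γ, hγσ, hγ⟩ := D.exists_sigmaC_eq_and_hForm_pos
  let e := Module.finBasis ℚ H
  obtain ⟨r, rfl⟩ := exists_real_coords_of_sigmaC_eq e hγσ
  let b := Module.finBasis ℂ D.W
  let ψ (v : Fin (Module.finrank ℂ D.W) → ℂ) : ℂ ⊗[ℚ] H := ∑ j, v j • (b j : ℂ ⊗[ℚ] H)
  have hψ v : ψ v = b.equivFun.symm v := by simp [ψ, Module.Basis.equivFun_symm_apply]
  have hre (s : Fin (Module.finrank ℚ H) → ℝ) w : (D.hForm w (∑ l, (s l : ℂ) • inclH H (e l))).re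
      = ∑ l, s l * (D.hForm w (inclH H (e l))).re := by
    simp [map_sum, Complex.re_sum]
  obtain ⟨s, hs⟩ := exists_rat_combination_pos (fun l v => (D.hForm (ψ v) (inclH H (e l))).re)
    (fun l => Complex.continuous_re.comp (D.continuous_hForm_sum_smul _ _))
    (fun l c v => by
      simp only [ψ, Pi.smul_apply, ← Complex.coe_smul, smul_assoc, ← Finset.smul_sum,
        hForm_ofReal_smul]
      simp [← Complex.ofReal_pow])
    (r := r) fun v hv => by
      rw [← hre]
      refine hγ _ (by rw [hψ]; exact Subtype.prop _) ?_
      rwa [hψ, Ne, ZeroMemClass.coe_eq_zero, LinearEquiv.map_eq_zero_iff]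
  refine ⟨∑ l, s l • e l, fun w hw hne => ?_⟩
  obtain ⟨v, rfl⟩ : ∃ v, ψ v = w := ⟨b.equivFun ⟨w, hw⟩, by simp [hψ]⟩
  have hv : v ≠ 0 := by rintro rfl; simp [ψ] at hne
  convert hs v hv using 1
  rw [← hre, map_sum]
  congr 3 with l
  rw [map_rat_smul, Complex.ofReal_ratCast, Rat.cast_smul_eq_qsmul]

theorem hForm_inclH_t (w : ℂ ⊗[ℚ] H) (a : H) :
    D.hForm w (inclH H (D.t a)) = -starRingEnd ℂ (D.hForm w (inclH H a)) := by
  have h : D.BC w (sigmaC H w * inclH H (D.t a)) =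
      starRingEnd ℂ (D.BC w (sigmaC H w * inclH H a)) := by
    rw [← tC_inclH, ← D.BC_adj_right, D.BC_symm, ← sigmaC_sigmaC (w * inclH H a), D.BC_conj,
      sigmaC_mul, sigmaC_inclH]
  rw [hForm_apply, hForm_apply, h, map_mul (starRingEnd ℂ), Complex.conj_I]
  ring

end HodgeAlgebraData

/-- There exists `a ∈ H` with `t(a) = −a` such that the skew form
`ω_a(x,y) := ⟨x, y·a⟩` has `W` as totally isotropic subspace and for every nonzero `w ∈ W`
the number `i·⟨w, σ(w)·a⟩` is real and strictly positive, i.e. the Hermitian form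
`h_a(w,w') := i·⟨w, σ(w')·a⟩` is positive definite on `W`: `ω_a` polarizes the weight `1`
Hodge structure with `H^{1,0}`-part `W`. -/
theorem exists_polarization (D : HodgeAlgebraData H) :
    ∃ a : H, D.t a = -a ∧
      (∀ w ∈ D.W, ∀ w' ∈ D.W, D.BC w (w' * inclH H a) = 0) ∧
      (∀ w ∈ D.W, w ≠ 0 →
        (Complex.I * D.BC w (sigmaC H w * inclH H a)).im = 0 ∧
        0 < (Complex.I * D.BC w (sigmaC H w * inclH H a)).re) := by
  obtain ⟨a, ha⟩ := D.exists_hForm_inclH_pos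
  refine ⟨a - D.t a, by rw [map_sub, D.t_invol, neg_sub],
    fun w hw w' hw' => D.BC_W_W hw (D.mul_mem_W hw' _), fun w hw hne => ?_⟩
  have h : Complex.I * D.BC w (sigmaC H w * inclH H (a - D.t a)) =
      2 * ((D.hForm w (inclH H a)).re : ℂ) := by
    rw [← D.hForm_apply, map_sub, map_sub, D.hForm_inclH_t, sub_neg_eq_add, Complex.add_conj, Complex.ofReal_mul, Complex.ofReal_ofNat]
  rw [h]
  simpa using ha w hw hne
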